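/- Let ρ > 1, α ∈ (0,1), H a complex Hilbert space, x ∈ H, F: ℓ_{2,ρ}(ℤ;H) → ℓ_{2,ρ}(ℤ;H), and u ∈ ℓ_{2,ρ}(ℤ;H) with spt u ⊆ ℕ and spt F(u) ⊆ ℕ. Then the Caputo-type equation τ(1-τ^{-1})^α u = F(u) + (1-τ^{-1})^α χ_{ℤ_{≥-1}} x holds if and only if u_0 = x and for all n ∈ ℕ, u_{n+1} = u_0 + ∑_{k=0}^n (-1)^{n-k} C(-α, n-k) F(u)_k. -/

import Mathlib

/-- The generalized binomial coefficient `C(α, n) = α(α-1)⋯(α-n+1)/n!`. -/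
noncomputable def gbc (α : ℂ) (n : ℕ) : ℂ :=
  (descPochhammer ℂ n).eval α / n.factorial

/-- The operator `(1 - τ⁻¹)^α`: convolution with the kernel `((-1)^k C(α,k))_{k ≥ 0}`. -/
noncomputable def fracPow (H : Type*) [NormedAddCommGroup H] [Module ℂ H]
    (α : ℂ) (u : ℤ → H) : ℤ → H :=
  fun n => ∑' k : ℕ, ((-1 : ℂ) ^ k * gbc α k) • u (n - k)

/-- The sequence `χ_{ℤ_{≥-1}} x`. -/
def chiGeNegOne (H : Type*) [AddCommGroup H] (x : H) : ℤ → H :=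
  fun m => if (-1 : ℤ) ≤ m then x else 0

open Finset

lemma gbc_zero (α : ℂ) : gbc α 0 = 1 := by simp [gbc]

lemma gbc_eq_choose (r : ℂ) (n : ℕ) : gbc r n = Ring.choose r n := by
  have h1 : (descPochhammer ℤ n).smeval r = (descPochhammer ℂ n).eval r := by
    rw [← Polynomial.eval₂_smulOneHom_eq_smeval, ← descPochhammer_map (Int.castRingHom ℂ) n,
      Polynomial.eval_map]
    congr 1
    ext <;> simp
  have h2 := Ring.descPochhammer_eq_factorial_smul_choose r n
  rw [h1] at h2
  have hf : (n.factorial : ℂ) ≠ 0 := by exact_mod_cast n.factorial_ne_zero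
  rw [gbc, h2, nsmul_eq_mul]
  field_simp

lemma gbc_add (x y : ℂ) (m : ℕ) :
    ∑ j ∈ range (m + 1), gbc x j * gbc y (m - j) = gbc (x + y) m := by
  simp only [gbc_eq_choose]
  rw [Ring.add_choose_eq m (Commute.all x y), Finset.Nat.sum_antidiagonal_eq_sum_range_succ_mk]

lemma gbc_zero_left (m : ℕ) : gbc 0 m = if m = 0 then 1 else 0 := by
  rw [gbc, descPochhammer_eval_zero]
  rcases m with _ | m <;> simp

lemma kernel_delta (α : ℂ) (m : ℕ) :
    ∑ j ∈ range (m + 1), ((-1 : ℂ) ^ j * gbc α j) * ((-1 : ℂ) ^ (m - j) * gbc (-α) (m - j))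
      = if m = 0 then 1 else 0 := by
  have key : ∀ j ∈ range (m + 1),
      ((-1 : ℂ) ^ j * gbc α j) * ((-1 : ℂ) ^ (m - j) * gbc (-α) (m - j))
        = (-1 : ℂ) ^ m * (gbc α j * gbc (-α) (m - j)) := by
    intro j hj
    have hjm : j + (m - j) = m := by rw [mem_range] at hj; omega
    have hpow : (-1 : ℂ) ^ j * (-1 : ℂ) ^ (m - j) = (-1 : ℂ) ^ m := by
      rw [← pow_add, hjm]
    linear_combination (gbc α j * gbc (-α) (m - j)) * hpow
  rw [sum_congr rfl key, ← mul_sum, gbc_add, add_neg_cancel, gbc_zero_left]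
  split <;> simp_all

lemma conv_inv {H : Type*} [AddCommGroup H] [Module ℂ H] (a b : ℕ → ℂ)
    (ha0 : a 0 = 1) (hb0 : b 0 = 1)
    (hab : ∀ m, ∑ j ∈ range (m + 1), a j * b (m - j) = if m = 0 then 1 else 0)
    (v g : ℕ → H) (hv : ∀ m, ∑ j ∈ range (m + 1), a (m - j) • v j = g m) :
    ∀ m, v m = ∑ j ∈ range (m + 1), b (m - j) • g j := by
  intro m
  induction m using Nat.strong_induction_on with
  | _ m IH =>
  have hm := hv m
  rw [sum_range_succ, Nat.sub_self, ha0, one_smul] at hm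
  have hvm : v m = g m - ∑ j ∈ range m, a (m - j) • v j := by
    rw [← hm]; abel
  have h2 : ∑ j ∈ range m, a (m - j) • v j
      = ∑ j ∈ range m, ∑ k ∈ range (j + 1), (a (m - j) * b (j - k)) • g k := by
    refine sum_congr rfl fun j hj => ?_
    rw [IH j (mem_range.mp hj), smul_sum]
    exact sum_congr rfl fun k _ => smul_smul _ _ _
  have h3 : ∑ j ∈ range m, ∑ k ∈ range (j + 1), (a (m - j) * b (j - k)) • g k
      = ∑ k ∈ range m, ∑ j ∈ Finset.Ico k m, (a (m - j) * b (j - k)) • g k := by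
    have := Finset.sum_Ico_Ico_comm 0 m (fun k j => (a (m - j) * b (j - k)) • g k)
    simp only [Finset.range_eq_Ico]
    exact this.symm
  have h4 : ∀ k ∈ range m, ∑ j ∈ Finset.Ico k m, a (m - j) * b (j - k) = - b (m - k) := by
    intro k hk
    have hkm : k < m := mem_range.mp hk
    have e1 : ∑ j ∈ Finset.Ico k m, a (m - j) * b (j - k)
        = ∑ i ∈ range (m - k), a (m - k - i) * b i := by
      rw [Finset.sum_Ico_eq_sum_range]
      refine sum_congr rfl fun i hi => ?_
      congr 2 <;> omega
    have e2 : ∑ i ∈ range (m - k + 1), a (m - k - i) * b i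
        = ∑ i ∈ range (m - k + 1), a i * b (m - k - i) := by
      rw [← Finset.sum_range_reflect]
      refine sum_congr rfl fun i hi => ?_
      rw [mem_range] at hi
      congr 2 <;> omega
    have e4 : ∑ i ∈ range (m - k + 1), a (m - k - i) * b i = 0 := by
      rw [e2, hab (m - k), if_neg (by omega)]
    rw [e1]
    calc ∑ i ∈ range (m - k), a (m - k - i) * b i
        = (∑ i ∈ range (m - k + 1), a (m - k - i) * b i)
          - a (m - k - (m - k)) * b (m - k) := by rw [sum_range_succ]; ring
      _ = - b (m - k) := by rw [e4, Nat.sub_self, ha0]; ring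
  have h5 : ∑ k ∈ range m, ∑ j ∈ Finset.Ico k m, (a (m - j) * b (j - k)) • g k
      = ∑ k ∈ range m, (- b (m - k)) • g k := by
    refine sum_congr rfl fun k hk => ?_
    rw [← Finset.sum_smul, h4 k hk]
  rw [hvm, h2, h3, h5, sum_range_succ, Nat.sub_self, hb0, one_smul]
  simp only [neg_smul, Finset.sum_neg_distrib, sub_neg_eq_add]
  abel

section FP
variable {H : Type*} [NormedAddCommGroup H] [NormedSpace ℂ H] (β : ℂ)

lemma fracPow_of_nonneg (u : ℤ → H) (hsu : ∀ n : ℤ, n < 0 → u n = 0) (N : ℕ) :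
    fracPow H β u (N : ℤ) = ∑ k ∈ range (N + 1), ((-1 : ℂ) ^ k * gbc β k) • u ((N : ℤ) - k) := by
  refine tsum_eq_sum fun k hk => ?_
  rw [mem_range] at hk
  rw [hsu ((N : ℤ) - k) (by omega), smul_zero]

lemma fracPow_of_neg (u : ℤ → H) (hsu : ∀ n : ℤ, n < 0 → u n = 0) (n : ℤ) (hn : n < 0) :
    fracPow H β u n = 0 := by
  have : (fun k : ℕ => ((-1 : ℂ) ^ k * gbc β k) • u (n - k)) = fun _ => 0 := by
    funext k
    rw [hsu (n - k) (by omega), smul_zero]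
  rw [fracPow, this, tsum_zero]

lemma fracPow_chi (x : H) (n : ℤ) (hn : -1 ≤ n) :
    fracPow H β (chiGeNegOne H x) n
      = (∑ k ∈ range ((n + 1).toNat + 1), ((-1 : ℂ) ^ k * gbc β k)) • x := by
  rw [fracPow, Finset.sum_smul]
  refine (tsum_eq_sum (s := range ((n + 1).toNat + 1)) fun k hk => ?_).trans
    (sum_congr rfl fun k hk => ?_)
  · rw [mem_range] at hk
    have : ¬ ((-1 : ℤ) ≤ n - k) := by omega
    simp [chiGeNegOne, this]
  · rw [mem_range] at hk
    have : (-1 : ℤ) ≤ n - k := by omega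
    simp [chiGeNegOne, this]

lemma fracPow_chi_low (x : H) (n : ℤ) (hn : n < -1) :
    fracPow H β (chiGeNegOne H x) n = 0 := by
  have : (fun k : ℕ => ((-1 : ℂ) ^ k * gbc β k) • chiGeNegOne H x (n - k)) = fun _ => 0 := by
    funext k
    have : ¬ ((-1 : ℤ) ≤ n - k) := by omega
    simp [chiGeNegOne, this]
  rw [fracPow, this, tsum_zero]

end FP

open Finset in
lemma nat_equiv {H : Type*} [AddCommGroup H] [Module ℂ H] (β : ℂ) (v g : ℕ → H)
    (hv0 : v 0 = 0) (hg0 : g 0 = 0) :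
    (∀ m : ℕ, ∑ j ∈ range (m + 1), ((-1 : ℂ) ^ (m - j) * gbc β (m - j)) • v j = g m) ↔
    (∀ m : ℕ, v m = ∑ j ∈ range (m + 1), ((-1 : ℂ) ^ (m - j) * gbc (-β) (m - j)) • g j) := by
  have ha0 : ((-1 : ℂ) ^ 0 * gbc β 0) = 1 := by simp [gbc_zero]
  have hb0 : ((-1 : ℂ) ^ 0 * gbc (-β) 0) = 1 := by simp [gbc_zero]
  have hab := kernel_delta β
  have hba : ∀ m, ∑ j ∈ range (m + 1),
      ((-1 : ℂ) ^ j * gbc (-β) j) * ((-1 : ℂ) ^ (m - j) * gbc β (m - j))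
        = if m = 0 then 1 else 0 := by
    intro m; have := kernel_delta (-β) m; rwa [neg_neg] at this
  constructor
  · intro h
    exact conv_inv (fun k => (-1 : ℂ) ^ k * gbc β k) (fun k => (-1 : ℂ) ^ k * gbc (-β) k)
      ha0 hb0 hab v g h
  · intro h m
    exact (conv_inv (fun k => (-1 : ℂ) ^ k * gbc (-β) k) (fun k => (-1 : ℂ) ^ k * gbc β k)
      hb0 ha0 hba g v (fun m => (h m).symm) m).symm

open Finset in
lemma step_eq {H : Type*} [NormedAddCommGroup H] [NormedSpace ℂ H] (β : ℂ) (x : H)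
    (w f : ℤ → H) (hsu : ∀ n : ℤ, n < 0 → w n = 0) (N : ℕ) :
    (fracPow H β w ((N : ℤ) + 1) = f (N : ℤ) + fracPow H β (chiGeNegOne H x) (N : ℤ)) ↔
    (∑ j ∈ range (N + 2), ((-1 : ℂ) ^ (N + 1 - j) * gbc β (N + 1 - j)) • (w (j : ℤ) - x)
      = f (N : ℤ)) := by
  have e1 : ((N : ℤ) + 1) = ((N + 1 : ℕ) : ℤ) := by push_cast; ring
  have etoNat : ((N : ℤ) + 1).toNat + 1 = N + 2 := by omega
  rw [e1, fracPow_of_nonneg β w hsu (N + 1), fracPow_chi β x (N : ℤ) (by omega), etoNat]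
  have e2 : ∑ k ∈ range (N + 2), ((-1 : ℂ) ^ k * gbc β k) • w (((N + 1 : ℕ) : ℤ) - k)
      = ∑ j ∈ range (N + 2), ((-1 : ℂ) ^ (N + 1 - j) * gbc β (N + 1 - j)) • w (j : ℤ) := by
    conv_lhs => rw [← Finset.sum_range_reflect]
    refine sum_congr rfl fun j hj => ?_
    rw [mem_range] at hj
    have h1 : N + 2 - 1 - j = N + 1 - j := by omega
    rw [h1]
    have h2 : ((N + 1 : ℕ) : ℤ) - ((N + 1 - j : ℕ) : ℤ) = (j : ℤ) := by omega
    rw [h2]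
  rw [e2]
  have e3 : ∑ j ∈ range (N + 2), ((-1 : ℂ) ^ (N + 1 - j) * gbc β (N + 1 - j))
      = ∑ k ∈ range (N + 2), ((-1 : ℂ) ^ k * gbc β k) := by
    conv_rhs => rw [← Finset.sum_range_reflect]
    refine sum_congr rfl fun j hj => ?_
    rw [show N + 2 - 1 - j = N + 1 - j from by omega]
  have e4 : ∑ j ∈ range (N + 2), ((-1 : ℂ) ^ (N + 1 - j) * gbc β (N + 1 - j)) • (w (j : ℤ) - x)
      = (∑ j ∈ range (N + 2), ((-1 : ℂ) ^ (N + 1 - j) * gbc β (N + 1 - j)) • w (j : ℤ))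
        - (∑ k ∈ range (N + 2), ((-1 : ℂ) ^ k * gbc β k)) • x := by
    rw [← e3, Finset.sum_smul]
    simp [smul_sub, Finset.sum_sub_distrib]
  rw [e4, sub_eq_iff_eq_add]

open Finset in
lemma step_rec {H : Type*} [AddCommGroup H] [Module ℂ H] (β : ℂ) (f : ℤ → H) (N : ℕ) :
    ∑ j ∈ range (N + 2), ((-1 : ℂ) ^ (N + 1 - j) * gbc β (N + 1 - j)) •
        (if j = 0 then (0 : H) else f ((j - 1 : ℕ) : ℤ))
      = ∑ k ∈ range (N + 1), ((-1 : ℂ) ^ (N - k) * gbc β (N - k)) • f (k : ℤ) := by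
  rw [Finset.sum_range_succ']
  simp


/-- Equivalence of the Caputo type equation
`τ(1-τ⁻¹)^α u = F(u) + (1-τ⁻¹)^α χ_{ℤ_{≥-1}} x` with the explicit recursion
`u_0 = x`, `u_{n+1} = u_0 + ∑_{k=0}^n (-1)^{n-k} C(-α,n-k) F(u)_k`. -/
theorem caputo_equivalence (H : Type*) [NormedAddCommGroup H]
    [InnerProductSpace ℂ H] [CompleteSpace H]
    (ρ : ℝ) (hρ : 1 < ρ) (α : ℝ) (hα : α ∈ Set.Ioo (0:ℝ) 1) (x : H)
    (F : (ℤ → H) → (ℤ → H)) (u : ℤ → H)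
    (hu : Summable fun k : ℤ => ‖u k‖ ^ 2 * ρ ^ (-2 * k))
    (hF : Summable fun k : ℤ => ‖F u k‖ ^ 2 * ρ ^ (-2 * k))
    (hsu : ∀ n : ℤ, n < 0 → u n = 0)
    (hsF : ∀ n : ℤ, n < 0 → F u n = 0) :
    (∀ n : ℤ, fracPow H (α : ℂ) u (n + 1)
        = F u n + fracPow H (α : ℂ) (chiGeNegOne H x) n) ↔
    (u 0 = x ∧ ∀ n : ℕ,
      u ((n : ℤ) + 1)
        = u 0 + ∑ k ∈ Finset.range (n + 1),
            ((-1 : ℂ) ^ (n - k) * gbc (-(α : ℂ)) (n - k)) • F u k) := by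
  have hneg1 : (fracPow H (α : ℂ) u (-1 + 1)
      = F u (-1) + fracPow H (α : ℂ) (chiGeNegOne H x) (-1)) ↔ u 0 = x := by
    have e0 : (-1 : ℤ) + 1 = ((0 : ℕ) : ℤ) := by norm_num
    rw [e0, fracPow_of_nonneg (α : ℂ) u hsu 0, fracPow_chi (α : ℂ) x (-1) (by omega),
      hsF (-1) (by omega), show ((-1 : ℤ) + 1).toNat + 1 = 1 from by omega]
    simp [gbc_zero]
  constructor
  · intro h
    have h0 : u 0 = x := hneg1.mp (h (-1))
    have hconv : ∀ m : ℕ, ∑ j ∈ range (m + 1),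
        ((-1 : ℂ) ^ (m - j) * gbc (α : ℂ) (m - j)) • (u (j : ℤ) - x)
        = (if m = 0 then (0 : H) else F u ((m - 1 : ℕ) : ℤ)) := by
      intro m
      match m with
      | 0 => simp [h0, gbc_zero]
      | N + 1 =>
        have hN := (step_eq (α : ℂ) x u (F u) hsu N).mp (h (N : ℤ))
        rw [show N + 1 + 1 = N + 2 from rfl]
        simpa using hN
    have hkey := (nat_equiv (α : ℂ) (fun j => u (j : ℤ) - x)
      (fun m => if m = 0 then (0 : H) else F u ((m - 1 : ℕ) : ℤ))
      (by simp [h0]) (by simp)).mp hconv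
    refine ⟨h0, fun N => ?_⟩
    have hk := hkey (N + 1)
    rw [show N + 1 + 1 = N + 2 from rfl, step_rec (-(α : ℂ)) (F u) N] at hk
    rw [sub_eq_iff_eq_add] at hk
    rw [show ((N : ℤ) + 1) = ((N + 1 : ℕ) : ℤ) from by push_cast; ring, hk, h0]
    abel
  · rintro ⟨h0, hrec⟩
    have hkey2 : ∀ m : ℕ, u (m : ℤ) - x = ∑ j ∈ range (m + 1),
        ((-1 : ℂ) ^ (m - j) * gbc (-(α : ℂ)) (m - j)) •
          (if j = 0 then (0 : H) else F u ((j - 1 : ℕ) : ℤ)) := by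
      intro m
      match m with
      | 0 => simp [h0, gbc_zero]
      | N + 1 =>
        rw [show N + 1 + 1 = N + 2 from rfl, step_rec (-(α : ℂ)) (F u) N,
          show ((N + 1 : ℕ) : ℤ) = ((N : ℤ) + 1) from by push_cast; ring, hrec N, h0]
        abel
    have hconv := (nat_equiv (α : ℂ) (fun j => u (j : ℤ) - x)
      (fun m => if m = 0 then (0 : H) else F u ((m - 1 : ℕ) : ℤ))
      (by simp [h0]) (by simp)).mpr hkey2
    intro n
    rcases lt_trichotomy n (-1) with hn | rfl | hn
    · rw [fracPow_of_neg (α : ℂ) u hsu (n + 1) (by omega),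
        fracPow_chi_low (α : ℂ) x n (by omega), hsF n (by omega)]
      simp
    · exact hneg1.mpr h0
    · obtain ⟨N, rfl⟩ := Int.eq_ofNat_of_zero_le (by omega : (0 : ℤ) ≤ n)
      refine (step_eq (α : ℂ) x u (F u) hsu N).mpr ?_
      have hc := hconv (N + 1)
      rw [show N + 1 + 1 = N + 2 from rfl] at hc
      simpa using hc
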